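/- For every n ≥ 1, R(n) equals the number of finite binary words a = a_1⋯a_k ∈ {0,1}^k (k ≥ 1) with a_1 = 1 and X(a) = x_n, and also equals the number of finite binary words a = a_1⋯a_k with a_1 = 1 and Y(a) = y_n. -/

import Mathlib

open Real Finset

noncomputable section

/-- The golden mean φ = (1+√5)/2. -/
def phi : ℝ := (1 + Real.sqrt 5) / 2

/-- ψ = (1−√5)/2 = −1/φ. -/
def psi : ℝ := (1 - Real.sqrt 5) / 2

/-- A word `a : Fin k → ℕ` is binary if all its letters are 0 or 1. -/
def IsBin {k : ℕ} (a : Fin k → ℕ) : Prop := ∀ i, a i ≤ 1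

/-- N(a) = ∑_{i=1}^k a_i F_{k+2−i}  (here `i : Fin k` corresponds to `i+1`). -/
def Nw {k : ℕ} (a : Fin k → ℕ) : ℕ := ∑ i : Fin k, a i * Nat.fib (k + 1 - (i : ℕ))

/-- X(a) = ∑_{i=1}^k a_i φ^{k+2−i}. -/
def Xw {k : ℕ} (a : Fin k → ℕ) : ℝ := ∑ i : Fin k, (a i : ℝ) * phi ^ (k + 1 - (i : ℕ))

/-- Y(a) = ∑_{i=1}^k a_i ψ^{k+2−i}. -/
def Yw {k : ℕ} (a : Fin k → ℕ) : ℝ := ∑ i : Fin k, (a i : ℝ) * psi ^ (k + 1 - (i : ℕ))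

/-- R(n): the number of partitions of n into distinct Fibonacci numbers, i.e. the number
of finite sets S of integers, each ≥ 2, with n = ∑_{i∈S} F_i.  (So R(0) = 1.) -/
def R (n : ℕ) : ℕ :=
  Nat.card {S : Finset ℕ // (∀ i ∈ S, 2 ≤ i) ∧ ∑ i ∈ S, Nat.fib i = n}

/-- `IsZeck n b` : `b = b_1⋯b_k` is the Zeckendorf word of `n ≥ 1`, i.e. a binary word
with `b_1 = 1`, no two consecutive 1's, and N(b) = n. -/
def IsZeck (n : ℕ) {k : ℕ} (b : Fin k → ℕ) : Prop :=
  IsBin b ∧ (∀ h : 0 < k, b ⟨0, h⟩ = 1) ∧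
    (∀ i j : Fin k, (j : ℕ) = (i : ℕ) + 1 → b i * b j = 0) ∧ Nw b = n

/-- `IsXY n x y` : `(x, y) = (x_n, y_n)`, i.e. `x = X(b)` and `y = Y(b)` for the
Zeckendorf word `b` of `n` when `n ≥ 1`, and `(x, y) = (0, 0)` when `n = 0`. -/
def IsXY (n : ℕ) (x y : ℝ) : Prop :=
  (n = 0 ∧ x = 0 ∧ y = 0) ∨
    ∃ (k : ℕ) (b : Fin k → ℕ), IsZeck n b ∧ x = Xw b ∧ y = Yw b

/-- The rotation T by 1/φ² on [−1/φ², 1/φ), extended to ℝ by the same formula. -/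
def T (y : ℝ) : ℝ := if y < 1 / phi ^ 3 then y + 1 / phi ^ 2 else y + 1 / phi ^ 2 - 1

/- ### Auxiliary development -/

lemma phi_eq : phi = goldenRatio := rfl
lemma psi_eq : psi = goldenConj := rfl

lemma psi_neg : psi < 0 := by rw [psi_eq]; exact goldenConj_neg
lemma psi_ne : psi ≠ 0 := ne_of_lt psi_neg
lemma psi_sq : psi ^ 2 = psi + 1 := by rw [psi_eq]; exact goldenConj_sq
lemma phi_sq : phi ^ 2 = phi + 1 := by rw [phi_eq]; exact goldenRatio_sq
lemma phi_psi : phi * psi = -1 := by rw [phi_eq, psi_eq]; exact goldenRatio_mul_goldenConj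
lemma phi_add_psi : phi + psi = 1 := by rw [phi_eq, psi_eq]; exact goldenRatio_add_goldenConj
lemma phi_irr : Irrational phi := by rw [phi_eq]; exact goldenRatio_irrational
lemma psi_irr : Irrational psi := by rw [psi_eq]; exact goldenConj_irrational

/-- ψ^{s+1} − ψ^{s+2} = −ψ^s. -/
lemma psi_pow_id (s : ℕ) : psi ^ (s + 1) - psi ^ (s + 2) = -psi ^ s := by
  have h1 : psi ^ (s + 1) = psi ^ s * psi := by ring
  have h2 : psi ^ (s + 2) = psi ^ s * psi ^ 2 := by ring
  rw [h1, h2, psi_sq]; ring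

/-- Key bound: a sum `∑_{i<d} c_i ψ^{s+1+i}` with coefficients in `[0,1]` lies strictly
between `-ψ^s` and `-ψ^{s+1}` (in the order determined by the parity of `s`). -/
lemma keyBound : ∀ (d s : ℕ) (c : ℕ → ℝ), (∀ j, 0 ≤ c j) → (∀ j, c j ≤ 1) →
    (Even s → -psi ^ s < ∑ i ∈ Finset.range d, c i * psi ^ (s + 1 + i) ∧
        ∑ i ∈ Finset.range d, c i * psi ^ (s + 1 + i) < -psi ^ (s + 1)) ∧
    (Odd s → -psi ^ (s + 1) < ∑ i ∈ Finset.range d, c i * psi ^ (s + 1 + i) ∧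
        ∑ i ∈ Finset.range d, c i * psi ^ (s + 1 + i) < -psi ^ s) := by
  intro d
  induction d with
  | zero =>
      intro s c _ _
      constructor
      · intro hs
        have h1 : 0 < psi ^ s := hs.pow_pos psi_ne
        have h2 : psi ^ (s + 1) < 0 := by
          have : Odd (s + 1) := Even.add_one hs
          exact this.pow_neg psi_neg
        simp only [Finset.range_zero, Finset.sum_empty]
        constructor <;> linarith
      · intro hs
        have h1 : psi ^ s < 0 := hs.pow_neg psi_neg
        have h2 : 0 < psi ^ (s + 1) := (hs.add_one).pow_pos psi_ne
        simp only [Finset.range_zero, Finset.sum_empty]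
        constructor <;> linarith
  | succ d ih =>
      intro s c hc0 hc1
      have hsum : ∑ i ∈ Finset.range (d + 1), c i * psi ^ (s + 1 + i)
          = (∑ i ∈ Finset.range d, c (i + 1) * psi ^ (s + 1 + 1 + i)) + c 0 * psi ^ (s + 1) := by
        rw [Finset.sum_range_succ' (fun i => c i * psi ^ (s + 1 + i)) d]
        congr 1
        apply Finset.sum_congr rfl
        intro i _
        congr 2
        omega
      have IH := ih (s + 1) (fun j => c (j + 1)) (fun j => hc0 _) (fun j => hc1 _)
      have hid := psi_pow_id s
      constructor
      · intro hs
        have hOdd : Odd (s + 1) := Even.add_one hs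
        have h' := IH.2 hOdd
        have hps : psi ^ (s + 1) < 0 := hOdd.pow_neg psi_neg
        have hle : psi ^ (s + 1) ≤ c 0 * psi ^ (s + 1) := by nlinarith [hc1 0]
        have hle2 : c 0 * psi ^ (s + 1) ≤ 0 := mul_nonpos_of_nonneg_of_nonpos (hc0 0) hps.le
        rw [hsum]
        constructor <;> nlinarith [h'.1, h'.2]
      · intro hs
        have hEven : Even (s + 1) := hs.add_one
        have h' := IH.1 hEven
        have hps : 0 < psi ^ (s + 1) := hEven.pow_pos psi_ne
        have hle : 0 ≤ c 0 * psi ^ (s + 1) := mul_nonneg (hc0 0) hps.le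
        have hle2 : c 0 * psi ^ (s + 1) ≤ psi ^ (s + 1) := by nlinarith [hc1 0]
        rw [hsum]
        constructor <;> nlinarith [h'.1, h'.2]

/-- For any binary word, `Y(a)` lies strictly between `-ψ²` and `-ψ`. -/
lemma Yw_bound {k : ℕ} {a : Fin k → ℕ} (ha : IsBin a) :
    -psi ^ 2 < Yw a ∧ Yw a < -psi := by
  classical
  set c : ℕ → ℝ := fun i => if h : i < k then (a ⟨k - 1 - i, by omega⟩ : ℝ) else 0 with hc
  have hc0 : ∀ j, 0 ≤ c j := by
    intro j; rw [hc]; dsimp only; split <;> positivity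
  have hc1 : ∀ j, c j ≤ 1 := by
    intro j; rw [hc]; dsimp only; split
    · exact_mod_cast ha _
    · norm_num
  have hY : Yw a = ∑ i ∈ Finset.range k, c i * psi ^ (1 + 1 + i) := by
    rw [Yw]
    have hstep : ∑ i : Fin k, (a i : ℝ) * psi ^ (k + 1 - (i : ℕ))
        = ∑ i : Fin k, (if h : (i : ℕ) < k then (a ⟨(i : ℕ), h⟩ : ℝ) else 0)
          * psi ^ (k + 1 - (i : ℕ)) := by
      apply Finset.sum_congr rfl
      intro i _
      rw [dif_pos i.isLt]
    rw [hstep]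
    rw [Fin.sum_univ_eq_sum_range (fun j => (if h : j < k then (a ⟨j, h⟩ : ℝ) else 0)
      * psi ^ (k + 1 - j)) k]
    rw [← Finset.sum_range_reflect (fun j => (if h : j < k then (a ⟨j, h⟩ : ℝ) else 0)
      * psi ^ (k + 1 - j)) k]
    · apply Finset.sum_congr rfl
      intro i hi
      rw [Finset.mem_range] at hi
      have h1 : k - 1 - i < k := by omega
      have h2 : k + 1 - (k - 1 - i) = 1 + 1 + i := by omega
      rw [dif_pos h1, h2, hc]
      dsimp only
      rw [dif_pos hi]
  have hkey := keyBound k 1 c hc0 hc1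
  have := hkey.2 odd_one
  rw [← hY] at this
  exact ⟨by simpa using this.1, by simpa using this.2⟩

/-- M(a) = ∑ a_i F_{k+1−i} (the "shifted" value). -/
def Mw {k : ℕ} (a : Fin k → ℕ) : ℕ := ∑ i : Fin k, a i * Nat.fib (k - (i : ℕ))

/-- Binet-type identity: r^{m+1} = F_{m+1}·r + F_m whenever r² = r + 1. -/
lemma binet_pow (r : ℝ) (hr : r ^ 2 = r + 1) : ∀ m : ℕ,
    r ^ (m + 1) = (Nat.fib (m + 1) : ℝ) * r + (Nat.fib m : ℝ) := by
  intro m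
  induction m with
  | zero => simp
  | succ m ih =>
      have h1 : r ^ (m + 2) = r ^ (m + 1) * r := by ring
      rw [h1, ih, Nat.fib_add_two]
      push_cast
      linear_combination (Nat.fib (m + 1) : ℝ) * hr

lemma Xw_eq {k : ℕ} (a : Fin k → ℕ) : Xw a = (Nw a : ℝ) * phi + (Mw a : ℝ) := by
  rw [Xw, Nw, Mw]
  push_cast
  rw [Finset.sum_mul, ← Finset.sum_add_distrib]
  apply Finset.sum_congr rfl
  intro i _
  have h1 : k + 1 - (i : ℕ) = (k - (i : ℕ)) + 1 := by omega
  rw [h1, binet_pow phi phi_sq]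
  ring

lemma Yw_eq {k : ℕ} (a : Fin k → ℕ) : Yw a = (Nw a : ℝ) * psi + (Mw a : ℝ) := by
  rw [Yw, Nw, Mw]
  push_cast
  rw [Finset.sum_mul, ← Finset.sum_add_distrib]
  apply Finset.sum_congr rfl
  intro i _
  have h1 : k + 1 - (i : ℕ) = (k - (i : ℕ)) + 1 := by omega
  rw [h1, binet_pow psi psi_sq]
  ring

/-- If r is irrational, then `N r + M` determines `(N, M)` for naturals. -/
lemma lin_indep {r : ℝ} (hr : Irrational r) {N M N' M' : ℕ}
    (h : (N : ℝ) * r + M = (N' : ℝ) * r + M') : N = N' ∧ M = M' := by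
  have hN : N = N' := by
    by_contra hne
    have hne' : (N : ℝ) - N' ≠ 0 := by
      intro h0
      exact hne (by exact_mod_cast sub_eq_zero.mp h0)
    have hrq : r = ((M' : ℝ) - M) / ((N : ℝ) - N') := by
      field_simp
      linarith [h]
    set q : ℚ := ((M' : ℚ) - M) / ((N : ℚ) - N') with hq
    apply hr
    refine ⟨q, ?_⟩
    rw [hrq, hq]
    push_cast
    ring
  refine ⟨hN, ?_⟩
  subst hN
  have : (M : ℝ) = M' := by linarith [h]
  exact_mod_cast this

/-- For binary words, N determines M. -/
lemma M_eq_of_N_eq {k k' : ℕ} {a : Fin k → ℕ} {b : Fin k' → ℕ}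
    (ha : IsBin a) (hb : IsBin b) (h : Nw a = Nw b) : Mw a = Mw b := by
  have hya := Yw_bound ha
  have hyb := Yw_bound hb
  have h1 := Yw_eq a
  have h2 := Yw_eq b
  have hps : psi ^ 2 - psi = 1 := by rw [psi_sq]; ring
  have hd1 : ((Mw a : ℝ)) - (Mw b : ℝ) < 1 := by
    have : (Mw a : ℝ) - Mw b = Yw a - Yw b := by rw [h1, h2, h]; ring
    rw [this]; linarith [hya.1, hya.2, hyb.1, hyb.2]
  have hd2 : -1 < ((Mw a : ℝ)) - (Mw b : ℝ) := by
    have : (Mw a : ℝ) - Mw b = Yw a - Yw b := by rw [h1, h2, h]; ring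
    rw [this]; linarith [hya.1, hya.2, hyb.1, hyb.2]
  have e1 : ((Mw a : ℤ) : ℝ) - ((Mw b : ℤ) : ℝ) < 1 := by push_cast; push_cast at hd1; linarith
  have e2 : (-1 : ℝ) < ((Mw a : ℤ) : ℝ) - ((Mw b : ℤ) : ℝ) := by
    push_cast; push_cast at hd2; linarith
  have f1 : (Mw a : ℤ) - Mw b < 1 := by exact_mod_cast (by push_cast; linarith : ((Mw a : ℤ) - Mw b : ℝ) < 1)
  have f2 : (-1 : ℤ) < (Mw a : ℤ) - Mw b := by exact_mod_cast (by push_cast; linarith : ((-1 : ℤ) : ℝ) < ((Mw a : ℤ) - Mw b : ℝ))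
  omega

lemma X_iff_N {k k' : ℕ} {a : Fin k → ℕ} {b : Fin k' → ℕ}
    (ha : IsBin a) (hb : IsBin b) : Xw a = Xw b ↔ Nw a = Nw b := by
  constructor
  · intro h
    rw [Xw_eq, Xw_eq] at h
    exact (lin_indep phi_irr h).1
  · intro h
    have hm := M_eq_of_N_eq ha hb h
    rw [Xw_eq, Xw_eq, h, hm]

lemma Y_iff_N {k k' : ℕ} {a : Fin k → ℕ} {b : Fin k' → ℕ}
    (ha : IsBin a) (hb : IsBin b) : Yw a = Yw b ↔ Nw a = Nw b := by
  constructor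
  · intro h
    rw [Yw_eq, Yw_eq] at h
    exact (lin_indep psi_irr h).1
  · intro h
    have hm := M_eq_of_N_eq ha hb h
    rw [Yw_eq, Yw_eq, h, hm]

end

section CountAux

open Finset

/-- The word associated to a finite set of Fibonacci indices. -/
noncomputable def wordOfSet (S : Finset ℕ) : Σ k : ℕ, Fin k → ℕ :=
  ⟨S.sup id - 1, fun i => if S.sup id - 1 + 1 - (i : ℕ) ∈ S then 1 else 0⟩

/-- The set of Fibonacci indices associated to a word. -/
noncomputable def setOfWord (p : Σ k : ℕ, Fin k → ℕ) : Finset ℕ :=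
  ((Finset.univ : Finset (Fin p.1)).filter (fun i => p.2 i = 1)).image
    (fun i : Fin p.1 => p.1 + 1 - (i : ℕ))

lemma sup_mem_of_nonempty {S : Finset ℕ} (h : S.Nonempty) : S.sup id ∈ S := by
  rw [← Finset.sup'_eq_sup h id, ← Finset.max'_eq_sup']
  exact S.max'_mem h

lemma sigma_ext {k k' : ℕ} (h : k = k') (a : Fin k → ℕ) (a' : Fin k' → ℕ)
    (ha : ∀ (i : ℕ) (h1 : i < k) (h2 : i < k'), a ⟨i, h1⟩ = a' ⟨i, h2⟩) :
    (⟨k, a⟩ : Σ k : ℕ, Fin k → ℕ) = ⟨k', a'⟩ := by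
  subst h
  exact congrArg (Sigma.mk k) (funext fun i => by simpa using ha i i.isLt i.isLt)

lemma mem_setOfWord {p : Σ k : ℕ, Fin k → ℕ} {j : ℕ} :
    j ∈ setOfWord p ↔ ∃ i : Fin p.1, p.2 i = 1 ∧ p.1 + 1 - (i : ℕ) = j := by
  simp [setOfWord, Finset.mem_image, Finset.mem_filter]

lemma setOfWord_two_le {p : Σ k : ℕ, Fin k → ℕ} {j : ℕ} (hj : j ∈ setOfWord p) : 2 ≤ j := by
  rw [mem_setOfWord] at hj
  obtain ⟨i, _, hij⟩ := hj
  have := i.isLt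
  omega

lemma setOfWord_sup {p : Σ k : ℕ, Fin k → ℕ} (h0 : ∃ h : 0 < p.1, p.2 ⟨0, h⟩ = 1) :
    (setOfWord p).sup id = p.1 + 1 := by
  obtain ⟨hk, h1⟩ := h0
  apply le_antisymm
  · apply Finset.sup_le
    intro j hj
    rw [mem_setOfWord] at hj
    obtain ⟨i, _, hij⟩ := hj
    simp only [id]
    omega
  · have hmem : p.1 + 1 ∈ setOfWord p := by
      rw [mem_setOfWord]
      exact ⟨⟨0, hk⟩, h1, by simp⟩
    exact Finset.le_sup (f := id) hmem

lemma setOfWord_sum {p : Σ k : ℕ, Fin k → ℕ} (hb : IsBin p.2) :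
    ∑ j ∈ setOfWord p, Nat.fib j = Nw p.2 := by
  classical
  rw [setOfWord, Finset.sum_image]
  · rw [Finset.sum_filter, Nw]
    apply Finset.sum_congr rfl
    intro i _
    rcases Nat.le_one_iff_eq_zero_or_eq_one.mp (hb i) with h | h <;> simp [h]
  · intro u hu v hv huv
    apply Fin.ext
    have := u.isLt
    have := v.isLt
    simp only at huv
    omega

lemma nonempty_of_sum {S : Finset ℕ} {n : ℕ} (hn : 1 ≤ n)
    (hs : ∑ i ∈ S, Nat.fib i = n) : S.Nonempty := by
  rcases Finset.eq_empty_or_nonempty S with h | h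
  · exfalso; rw [h] at hs; simp at hs; omega
  · exact h

lemma two_le_sup {S : Finset ℕ} (h2 : ∀ i ∈ S, 2 ≤ i) (hne : S.Nonempty) :
    2 ≤ S.sup id := by
  obtain ⟨j, hj⟩ := hne
  exact le_trans (h2 j hj) (Finset.le_sup (f := id) hj)

lemma wordOfSet_isBin (S : Finset ℕ) : IsBin (wordOfSet S).2 := by
  intro i
  simp only [wordOfSet]
  split <;> omega

lemma setOfWord_wordOfSet {S : Finset ℕ} (h2 : ∀ i ∈ S, 2 ≤ i) (hne : S.Nonempty) :
    setOfWord (wordOfSet S) = S := by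
  classical
  obtain ⟨j0, hj0⟩ := hne
  have hsup2 : 2 ≤ S.sup id := le_trans (h2 j0 hj0) (Finset.le_sup (f := id) hj0)
  ext j
  rw [mem_setOfWord]
  constructor
  · rintro ⟨i, hi1, hi2⟩
    have hiv : (i : ℕ) < S.sup id - 1 := i.isLt
    by_cases hc : S.sup id - 1 + 1 - (i : ℕ) ∈ S
    · have hj' : S.sup id - 1 + 1 - (i : ℕ) = j := hi2
      rwa [hj'] at hc
    · have : (wordOfSet S).2 i = 0 := by
        show (if S.sup id - 1 + 1 - (i : ℕ) ∈ S then 1 else 0) = 0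
        rw [if_neg hc]
      rw [hi1] at this
      omega
  · intro hj
    have hjle : j ≤ S.sup id := Finset.le_sup (f := id) hj
    have hj2 : 2 ≤ j := h2 j hj
    have hik : S.sup id - 1 + 1 - j < S.sup id - 1 := by omega
    refine ⟨⟨S.sup id - 1 + 1 - j, hik⟩, ?_, ?_⟩
    · show (if S.sup id - 1 + 1 - (S.sup id - 1 + 1 - j) ∈ S then 1 else 0) = 1
      have hc : S.sup id - 1 + 1 - (S.sup id - 1 + 1 - j) = j := by omega
      rw [hc, if_pos hj]
    · show S.sup id - 1 + 1 - (S.sup id - 1 + 1 - j) = j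
      omega

/-- The bijection between Fibonacci partitions of `n` and binary words with
leading 1 and value `n`. -/
noncomputable def partEquiv (n : ℕ) (hn : 1 ≤ n) :
    {S : Finset ℕ // (∀ i ∈ S, 2 ≤ i) ∧ ∑ i ∈ S, Nat.fib i = n} ≃
    {p : Σ k : ℕ, Fin k → ℕ //
      IsBin p.2 ∧ (∃ h : 0 < p.1, p.2 ⟨0, h⟩ = 1) ∧ Nw p.2 = n} where
  toFun := fun q =>
    ⟨wordOfSet q.1, wordOfSet_isBin q.1, by
      classical
      have hne : q.1.Nonempty := nonempty_of_sum hn q.2.2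
      have hsup2 : 2 ≤ q.1.sup id := two_le_sup q.2.1 hne
      refine ⟨by show 0 < q.1.sup id - 1; omega, ?_⟩
      show (if q.1.sup id - 1 + 1 - (0 : ℕ) ∈ q.1 then 1 else 0) = 1
      have hcond : q.1.sup id - 1 + 1 - (0 : ℕ) ∈ q.1 := by
        have h' : q.1.sup id - 1 + 1 - (0 : ℕ) = q.1.sup id := by omega
        rw [h']
        exact sup_mem_of_nonempty hne
      rw [if_pos hcond], by
      classical
      have hne : q.1.Nonempty := nonempty_of_sum hn q.2.2
      have hsw := setOfWord_sum (p := wordOfSet q.1) (wordOfSet_isBin q.1)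
      rw [setOfWord_wordOfSet q.2.1 hne] at hsw
      rw [← hsw, q.2.2]⟩
  invFun := fun q =>
    ⟨setOfWord q.1, fun i hi => setOfWord_two_le hi, by
      rw [setOfWord_sum q.2.1, q.2.2.2]⟩
  left_inv := by
    classical
    rintro ⟨S, h2, hsum⟩
    apply Subtype.ext
    have hne : S.Nonempty := by
      rcases Finset.eq_empty_or_nonempty S with h | h
      · exfalso; rw [h] at hsum; simp at hsum; omega
      · exact h
    exact setOfWord_wordOfSet h2 hne
  right_inv := by
    classical
    rintro ⟨⟨k, a⟩, hb, h0, hNw⟩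
    apply Subtype.ext
    have hsup : (setOfWord ⟨k, a⟩).sup id = k + 1 := setOfWord_sup h0
    obtain ⟨hk, h1⟩ := h0
    show wordOfSet (setOfWord ⟨k, a⟩) = ⟨k, a⟩
    apply sigma_ext
    · show (setOfWord ⟨k, a⟩).sup id - 1 = k
      omega
    · intro i hik hik'
      show (if (setOfWord ⟨k, a⟩).sup id - 1 + 1 - i ∈ setOfWord ⟨k, a⟩ then 1 else 0)
          = a ⟨i, hik'⟩
      have hrw : (setOfWord ⟨k, a⟩).sup id - 1 + 1 - i = k + 1 - i := by omega
      rw [hrw]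
      have hmem : (k + 1 - i ∈ setOfWord ⟨k, a⟩) ↔ a ⟨i, hik'⟩ = 1 := by
        rw [mem_setOfWord]
        constructor
        · rintro ⟨i', hi'1, hi'2⟩
          have hv : i' = (⟨i, hik'⟩ : Fin k) := by
            apply Fin.ext
            have := i'.isLt
            simp only at hi'2 ⊢
            omega
          rwa [hv] at hi'1
        · intro h
          exact ⟨⟨i, hik'⟩, h, by simp⟩
      by_cases hc : a ⟨i, hik'⟩ = 1
      · rw [if_pos (hmem.mpr hc), hc]
      · rw [if_neg (fun hmm => hc (hmem.mp hmm))]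
        have hbl : a ⟨i, hik'⟩ ≤ 1 := hb ⟨i, hik'⟩
        omega

end CountAux

/-- for n ≥ 1, R(n) is the number of binary words a = a_1⋯a_k (k ≥ 1)
with a_1 = 1 and X(a) = x_n, and also the number of such words with Y(a) = y_n. -/
theorem stmt_3 (n : ℕ) (hn : 1 ≤ n) (x y : ℝ) (hxy : IsXY n x y) :
    R n = Nat.card {p : Σ k : ℕ, Fin k → ℕ //
        IsBin p.2 ∧ (∃ h : 0 < p.1, p.2 ⟨0, h⟩ = 1) ∧ Xw p.2 = x} ∧
    R n = Nat.card {p : Σ k : ℕ, Fin k → ℕ //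
        IsBin p.2 ∧ (∃ h : 0 < p.1, p.2 ⟨0, h⟩ = 1) ∧ Yw p.2 = y} := by
  rcases hxy with ⟨h0, -, -⟩ | ⟨k0, b, hz, hx, hy⟩
  · omega
  obtain ⟨hbbin, -, -, hbN⟩ := hz
  have base : R n = Nat.card {p : Σ k : ℕ, Fin k → ℕ //
      IsBin p.2 ∧ (∃ h : 0 < p.1, p.2 ⟨0, h⟩ = 1) ∧ Nw p.2 = n} :=
    Nat.card_congr (partEquiv n hn)
  constructor
  · refine Eq.trans base (Nat.card_congr (Equiv.subtypeEquivRight ?_))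
    intro p
    constructor
    · rintro ⟨h1, h2, h3⟩
      refine ⟨h1, h2, ?_⟩
      rw [hx]
      exact (X_iff_N h1 hbbin).mpr (by rw [h3, hbN])
    · rintro ⟨h1, h2, h3⟩
      refine ⟨h1, h2, ?_⟩
      have hX : Xw p.2 = Xw b := by rw [h3, hx]
      have hN := (X_iff_N h1 hbbin).mp hX
      rw [hN, hbN]
  · refine Eq.trans base (Nat.card_congr (Equiv.subtypeEquivRight ?_))
    intro p
    constructor
    · rintro ⟨h1, h2, h3⟩
      refine ⟨h1, h2, ?_⟩
      rw [hy]
      exact (Y_iff_N h1 hbbin).mpr (by rw [h3, hbN])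
    · rintro ⟨h1, h2, h3⟩
      refine ⟨h1, h2, ?_⟩
      have hY : Yw p.2 = Yw b := by rw [h3, hy]
      have hN := (Y_iff_N h1 hbbin).mp hY
      rw [hN, hbN]
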